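/- arXiv:2511.19680 — 4 statements merged into one kernel-verified Lean document; each statement's English description precedes it below -/
import Mathlib

section
/- Let ω ∈ [-1,0), δ ∈ (0,1/2), λ_A = 1/2 + δ, λ_B = 1/2 - δ, and for a creator of group i define NE_i(α) = [(2+ω) - 2α·λ_{-i}·(1-ω)]/4 where λ_{-i} is the opposing group's mass. If α̲ = (ω+2)/((1+2δ)(1-ω)) < α < ᾱ = (ω+2)/((1-2δ)(1-ω)), then NE_A(α) > 0 and NE_B(α) < 0. -/
/-- Polarized-creation region: majority net engagement positive, minority negative. -/
theorem stmt5 (ω δ α : ℝ)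
    (hω : ω ∈ Set.Ico (-1 : ℝ) 0) (hδ : δ ∈ Set.Ioo (0 : ℝ) (1 / 2))
    (hlow : (ω + 2) / ((1 + 2 * δ) * (1 - ω)) < α)
    (hhigh : α < (ω + 2) / ((1 - 2 * δ) * (1 - ω))) :
    0 < ((2 + ω) - 2 * α * (1 / 2 - δ) * (1 - ω)) / 4 ∧
    ((2 + ω) - 2 * α * (1 / 2 + δ) * (1 - ω)) / 4 < 0 := by
  have hω' : 0 < 1 - ω := by linarith [hω.2]
  have hmajority : α * ((1 - 2 * δ) * (1 - ω)) < ω + 2 :=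
    (lt_div_iff₀ (mul_pos (by linarith [hδ.2]) hω')).mp hhigh
  have hminority : ω + 2 < α * ((1 + 2 * δ) * (1 - ω)) :=
    (div_lt_iff₀ (mul_pos (by linarith [hδ.1]) hω')).mp hlow
  constructor <;> linarith
end

section
/- In the setting of the previous map F_i(P) = clamp((1 + c_i·(1 - Σ_j λ_j s_j P_j))/2), if additionally (max_i |c_i|)·(Σ_j λ_j s_j) < 2, then F is a contraction on [0,1]^n under the sup norm, and hence the equilibrium (fixed point) is unique. -/
/-!
The best response is the clamp to `[0,1]` of an affine function of the aggregate supply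
`V = Σ_j λ_j s_j P_j`. Clamping is 1-Lipschitz, and with nonnegative weights `V` is
`(Σ_j λ_j s_j)`-Lipschitz for the sup norm, so `F` is Lipschitz with constant
`(max_i |c_i|) (Σ_j λ_j s_j) / 2 < 1`. Banach's fixed point theorem on the complete space `ℝⁿ` gives a
unique fixed point, which lies in `[0,1]^n` because `F` takes values there.
-/

open Finset

lemma abs_clamp_sub_clamp_le (a b : ℝ) :
    |min 1 (max 0 a) - min 1 (max 0 b)| ≤ |a - b| :=
  (abs_min_sub_min_le_max _ _ _ _).trans (by simpa using abs_max_sub_max_le_max 0 a 0 b)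

variable {ι : Type*} [Fintype ι]

lemma abs_sum_mul_sub_sum_mul_le {w : ι → ℝ} (hw : ∀ j, 0 ≤ w j) (P Q : ι → ℝ) :
    |∑ j, w j * P j - ∑ j, w j * Q j| ≤ (∑ j, w j) * ‖P - Q‖ := by
  rw [← sum_sub_distrib, sum_mul]
  refine (abs_sum_le_sum_abs _ _).trans (sum_le_sum fun j _ => ?_)
  rw [← mul_sub, abs_mul, abs_of_nonneg (hw j)]
  exact mul_le_mul_of_nonneg_left (norm_le_pi_norm (P - Q) j) (hw j)

lemma exists_abs_le_and_mul_lt {c : ι → ℝ} {S : ℝ} (h : ∀ i, |c i| * S < 2) :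
    ∃ C, 0 ≤ C ∧ (∀ i, |c i| ≤ C) ∧ C * S < 2 := by
  cases isEmpty_or_nonempty ι with
  | inl _ => exact ⟨0, le_rfl, isEmptyElim, by simp⟩
  | inr _ =>
    obtain ⟨i₀, hi₀⟩ := Finite.exists_max fun i => |c i|
    exact ⟨|c i₀|, abs_nonneg _, hi₀, h i₀⟩

noncomputable def bestResponse (c w P : ι → ℝ) : ι → ℝ :=
  fun i => min 1 (max 0 ((1 + c i * (1 - ∑ j, w j * P j)) / 2))

lemma bestResponse_mem_Icc (c w P : ι → ℝ) : bestResponse c w P ∈ Set.Icc 0 1 :=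
  ⟨fun _ => le_min zero_le_one (le_max_left _ _), fun _ => min_le_left _ _⟩

lemma norm_bestResponse_sub_le {c w : ι → ℝ} {C : ℝ} (hC0 : 0 ≤ C) (hC : ∀ i, |c i| ≤ C)
    (hw : ∀ j, 0 ≤ w j) (P Q : ι → ℝ) :
    ‖bestResponse c w P - bestResponse c w Q‖ ≤ C * (∑ j, w j) / 2 * ‖P - Q‖ := by
  have hS : 0 ≤ ∑ j, w j := sum_nonneg fun j _ => hw j
  refine (pi_norm_le_iff_of_nonneg
    (mul_nonneg (div_nonneg (mul_nonneg hC0 hS) zero_le_two) (norm_nonneg _))).2 fun i => ?_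
  have hV := abs_sum_mul_sub_sum_mul_le hw Q P
  rw [norm_sub_rev Q P] at hV
  calc ‖bestResponse c w P i - bestResponse c w Q i‖
      ≤ |(1 + c i * (1 - ∑ j, w j * P j)) / 2 - (1 + c i * (1 - ∑ j, w j * Q j)) / 2| :=
        abs_clamp_sub_clamp_le _ _
    _ = |c i| * |∑ j, w j * Q j - ∑ j, w j * P j| / 2 := by
        rw [← abs_mul, ← abs_two, ← abs_div]; ring_nf
    _ ≤ C * ((∑ j, w j) * ‖P - Q‖) / 2 := by gcongr; exact hC i
    _ = C * (∑ j, w j) / 2 * ‖P - Q‖ := by ring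

lemma existsUnique_mem_fixed_of_norm_sub_le {E : Type*} [NormedAddCommGroup E] [CompleteSpace E]
    {f : E → E} {K : ℝ} (hK0 : 0 ≤ K) (hK1 : K < 1) (hf : ∀ x y, ‖f x - f y‖ ≤ K * ‖x - y‖)
    {s : Set E} (hs : ∀ x, f x ∈ s) :
    ∃! x, x ∈ s ∧ f x = x := by
  have hcontr : ContractingWith ⟨K, hK0⟩ f :=
    ⟨hK1, LipschitzWith.of_dist_le_mul fun x y => by rw [dist_eq_norm, dist_eq_norm]; exact hf x y⟩
  have hfix := hcontr.fixedPoint_isFixedPt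
  exact ⟨_, ⟨hfix ▸ hs _, hfix⟩, fun _ hy => hcontr.fixedPoint_unique hy.2⟩

theorem stmt8_general (n : ℕ) (c lam s : Fin n → ℝ)
    (hlam : ∀ j, 0 ≤ lam j) (hs : ∀ j, s j ∈ Set.Icc (0 : ℝ) 1)
    (hcontr : ∀ i, |c i| * (∑ j, lam j * s j) < 2) :
    (∃ K : ℝ, K < 1 ∧ 0 ≤ K ∧
      ∀ P ∈ Set.Icc (0 : Fin n → ℝ) 1, ∀ Q ∈ Set.Icc (0 : Fin n → ℝ) 1,
        ‖(fun i => min 1 (max 0 ((1 + c i * (1 - ∑ j, lam j * s j * P j)) / 2)))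
          - (fun i => min 1 (max 0 ((1 + c i * (1 - ∑ j, lam j * s j * Q j)) / 2)))‖
          ≤ K * ‖P - Q‖) ∧
    (∃! P : Fin n → ℝ, P ∈ Set.Icc (0 : Fin n → ℝ) 1 ∧
      (fun i => min 1 (max 0 ((1 + c i * (1 - ∑ j, lam j * s j * P j)) / 2))) = P) := by
  have hw : ∀ j, 0 ≤ lam j * s j := fun j => mul_nonneg (hlam j) (hs j).1
  obtain ⟨C, hC0, hC, hCS⟩ := exists_abs_le_and_mul_lt hcontr
  have hK0 : 0 ≤ C * (∑ j, lam j * s j) / 2 :=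
    div_nonneg (mul_nonneg hC0 (sum_nonneg fun j _ => hw j)) zero_le_two
  have hK1 : C * (∑ j, lam j * s j) / 2 < 1 := by linarith
  have hlip := norm_bestResponse_sub_le hC0 hC hw
  exact ⟨⟨_, hK1, hK0, fun P _ Q _ => hlip P Q⟩,
    existsUnique_mem_fixed_of_norm_sub_le hK0 hK1 hlip (bestResponse_mem_Icc c _)⟩

/-- Uniqueness of the rational-expectations equilibrium: under the contraction
condition `(max_i |c_i|)·(Σ_j λ_j s_j) < 2`, the best-response map is a sup-norm
contraction on `[0,1]^n` and the fixed point is unique. -/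
theorem stmt8 (n : ℕ) (hn : 1 ≤ n) (c lam s : Fin n → ℝ)
    (hc : ∀ i, c i ∈ Set.Icc (-1 : ℝ) 1)
    (hlam : ∀ j, 0 ≤ lam j) (hs : ∀ j, s j ∈ Set.Icc (0 : ℝ) 1)
    (hsum : ∑ j, lam j * s j ≤ 1)
    (hcontr : ∀ i, |c i| * (∑ j, lam j * s j) < 2) :
    (∃ K : ℝ, K < 1 ∧ 0 ≤ K ∧
      ∀ P ∈ Set.Icc (0 : Fin n → ℝ) 1, ∀ Q ∈ Set.Icc (0 : Fin n → ℝ) 1,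
        ‖(fun i => min 1 (max 0 ((1 + c i * (1 - ∑ j, lam j * s j * P j)) / 2)))
          - (fun i => min 1 (max 0 ((1 + c i * (1 - ∑ j, lam j * s j * Q j)) / 2)))‖
          ≤ K * ‖P - Q‖) ∧
    (∃! P : Fin n → ℝ, P ∈ Set.Icc (0 : Fin n → ℝ) 1 ∧
      (fun i => min 1 (max 0 ((1 + c i * (1 - ∑ j, lam j * s j * P j)) / 2))) = P) :=
  stmt8_general n c lam s hlam hs hcontr
end

section
/- Fix ω ∈ [-1,0), α ∈ (0,1], and δ ∈ (0,1/2). Define λ̲_N = 1 - (ω+2)/(α(1-ω)(1-2δ)) and λ̄_N = 1 - (ω+2)/(α(1-ω)(1+2δ)). Then λ̲_N < λ̄_N < 1, and for a partisan non-toxic creator of the majority group A with net engagement NE_A(λ_N) = [(2+ω) - 2α(1-λ_N)(1/2-δ)(1-ω)]/4 and of the minority group B with NE_B(λ_N) = [(2+ω) - 2α(1-λ_N)(1/2+δ)(1-ω)]/4, we have: NE_A(λ_N) > 0 iff λ_N > λ̲_N, and NE_B(λ_N) > 0 iff λ_N > λ̄_N. Consequently, for λ_N strictly between λ̲_N and λ̄_N,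 NE_A > 0 > NE_B. -/
/-!
Both net engagements have the form `((2 + ω) - κ (1 - λ_N)) / 4`, with
`κ = α (1 - ω) (1 ∓ 2δ) > 0` proportional to the mass of the creator's opposing group. Such an expression is positive exactly when `λ_N > 1 - (ω + 2) / κ`,
and since the majority creator faces the smaller opposing group (smaller `κ`), its threshold is
the lower one.
-/

section Threshold

variable {a c c' l : ℝ}

theorem one_sub_div_lt_iff (hc : 0 < c) : 1 - a / c < l ↔ c * (1 - l) < a := by
  rw [sub_lt_comm, lt_div_iff₀' hc]

theorem lt_one_sub_div_iff (hc : 0 < c) : l < 1 - a / c ↔ a < c * (1 - l) := by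
  rw [lt_sub_comm, div_lt_iff₀' hc]

theorem one_sub_div_lt_one_sub_div (ha : 0 < a) (hc : 0 < c) (h : c < c') :
    1 - a / c < 1 - a / c' :=
  sub_lt_sub_left (div_lt_div_of_pos_left ha hc h) 1

theorem one_sub_div_lt_one (ha : 0 < a) (hc : 0 < c) : 1 - a / c < 1 :=
  sub_lt_self 1 (div_pos ha hc)

theorem netEngagement_pos_iff {ω κ : ℝ} (hκ : 0 < κ) (l : ℝ) :
    0 < ((2 + ω) - κ * (1 - l)) / 4 ↔ 1 - (ω + 2) / κ < l := by
  rw [div_pos_iff_of_pos_right four_pos, sub_pos, one_sub_div_lt_iff hκ, add_comm]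

theorem netEngagement_neg_of_lt {ω κ l : ℝ} (hκ : 0 < κ) (hl : l < 1 - (ω + 2) / κ) :
    ((2 + ω) - κ * (1 - l)) / 4 < 0 := by
  rw [lt_one_sub_div_iff hκ, add_comm] at hl
  exact div_neg_of_neg_of_pos (sub_neg.mpr hl) four_pos

end Threshold

/-- Neutral-user thresholds and the sign pattern of partisan net engagements. -/
theorem stmt13 (ω α δ : ℝ)
    (hω : ω ∈ Set.Ico (-1 : ℝ) 0) (hα : α ∈ Set.Ioc (0 : ℝ) 1)
    (hδ : δ ∈ Set.Ioo (0 : ℝ) (1 / 2)) :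
    (1 - (ω + 2) / (α * (1 - ω) * (1 - 2 * δ))
      < 1 - (ω + 2) / (α * (1 - ω) * (1 + 2 * δ))) ∧
    (1 - (ω + 2) / (α * (1 - ω) * (1 + 2 * δ)) < 1) ∧
    (∀ lamN : ℝ,
      (0 < ((2 + ω) - 2 * α * (1 - lamN) * (1 / 2 - δ) * (1 - ω)) / 4 ↔
        1 - (ω + 2) / (α * (1 - ω) * (1 - 2 * δ)) < lamN)) ∧
    (∀ lamN : ℝ,
      (0 < ((2 + ω) - 2 * α * (1 - lamN) * (1 / 2 + δ) * (1 - ω)) / 4 ↔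
        1 - (ω + 2) / (α * (1 - ω) * (1 + 2 * δ)) < lamN)) ∧
    (∀ lamN : ℝ,
      1 - (ω + 2) / (α * (1 - ω) * (1 - 2 * δ)) < lamN →
      lamN < 1 - (ω + 2) / (α * (1 - ω) * (1 + 2 * δ)) →
      0 < ((2 + ω) - 2 * α * (1 - lamN) * (1 / 2 - δ) * (1 - ω)) / 4 ∧
      ((2 + ω) - 2 * α * (1 - lamN) * (1 / 2 + δ) * (1 - ω)) / 4 < 0) := by
  obtain ⟨hω₁, hω₀⟩ := hω
  obtain ⟨hδ₀, hδ₁⟩ := hδ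
  have hω₂ : 0 < ω + 2 := by linarith
  have hαω : 0 < α * (1 - ω) := mul_pos hα.1 (by linarith)
  have hκA : 0 < α * (1 - ω) * (1 - 2 * δ) := mul_pos hαω (by linarith)
  have hκB : 0 < α * (1 - ω) * (1 + 2 * δ) := mul_pos hαω (by linarith)
  have hκAB : α * (1 - ω) * (1 - 2 * δ) < α * (1 - ω) * (1 + 2 * δ) :=
    mul_lt_mul_of_pos_left (by linarith) hαω
  have hNEA (l : ℝ) : ((2 + ω) - 2 * α * (1 - l) * (1 / 2 - δ) * (1 - ω)) / 4
      = ((2 + ω) - α * (1 - ω) * (1 - 2 * δ) * (1 - l)) / 4 := by ring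
  have hNEB (l : ℝ) : ((2 + ω) - 2 * α * (1 - l) * (1 / 2 + δ) * (1 - ω)) / 4
      = ((2 + ω) - α * (1 - ω) * (1 + 2 * δ) * (1 - l)) / 4 := by ring
  have hA (l : ℝ) := hNEA l ▸ netEngagement_pos_iff hκA l
  refine ⟨one_sub_div_lt_one_sub_div hω₂ hκA hκAB, one_sub_div_lt_one hω₂ hκB, hA,
    fun l => hNEB l ▸ netEngagement_pos_iff hκB l, fun l hlA hlB => ⟨(hA l).mpr hlA, ?_⟩⟩
  rw [hNEB]
  exact netEngagement_neg_of_lt hκB hlB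
end

section
/- Fix ω ∈ [-1,0), δ ∈ (0,1/2), λ_A = 1/2+δ, λ_B = 1/2-δ, and personalization level φ ∈ [0,1). The minority non-toxic creator's net engagement under personalization, NE_B(φ, α) = λ_B·(2+ω)/4 + (1-φ)·λ_A·[(2+ω) - 2α(1-ω)]/4, is positive if and only if α < A(φ) := (2+ω)·(λ_B + (1-φ)λ_A)/(2(1-φ)λ_A(1-ω)); moreover A(φ) is strictly increasing in φ on [0,1). -/
/-! The net engagement is affine in `α` with slope `-(1-φ)λ_A(1-ω)/2 < 0`, so it is positive
exactly below its root `A(φ)`. Writing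
`A(φ) = (2+ω)/(2(1-ω)) + (2+ω)λ_B / (2λ_A(1-ω)) · 1/(1-φ)`, the threshold is a positive constant
plus a positive multiple of `1/(1-φ)`, hence strictly increasing on `φ < 1`. -/

section Threshold

variable {lB lA e m : ℝ}

theorem netEngagement_pos_iff_s14 {s α : ℝ} (hs : 0 < s * lA) (hm : 0 < m) :
    0 < lB * (e / 4) + s * lA * ((e - 2 * α * m) / 4) ↔
      α < e * (lB + s * lA) / (2 * s * lA * m) := by
  have hD : 0 < 2 * s * lA * m := by nlinarith
  have affine : lB * (e / 4) + s * lA * ((e - 2 * α * m) / 4)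
      = (e * (lB + s * lA) - α * (2 * s * lA * m)) / 4 := by ring
  rw [affine, div_pos_iff_of_pos_right four_pos, sub_pos, lt_div_iff₀ hD]

theorem threshold_eq {φ : ℝ} (hφ : φ < 1) (hA : 0 < lA) (hm : 0 < m) :
    e * (lB + (1 - φ) * lA) / (2 * (1 - φ) * lA * m)
      = e / (2 * m) + e * lB / (2 * lA * m) / (1 - φ) := by
  have : 1 - φ ≠ 0 := by linarith
  field_simp
  ring

theorem strictMonoOn_threshold (hB : 0 < lB) (hA : 0 < lA) (he : 0 < e) (hm : 0 < m) :
    StrictMonoOn (fun φ => e * (lB + (1 - φ) * lA) / (2 * (1 - φ) * lA * m)) (Set.Iio 1) := by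
  intro a ha b hb hab
  rw [Set.mem_Iio] at ha hb
  simp only [threshold_eq ha hA hm, threshold_eq hb hA hm]
  gcongr

end Threshold

/-- Personalization protects the minority: sign condition of minority net
engagement and strict monotonicity of the critical threshold `A(φ)`. -/
theorem stmt14 (ω δ : ℝ)
    (hω : ω ∈ Set.Ico (-1 : ℝ) 0) (hδ : δ ∈ Set.Ioo (0 : ℝ) (1 / 2)) :
    (∀ φ ∈ Set.Ico (0 : ℝ) 1, ∀ α : ℝ,
      (0 < (1 / 2 - δ) * ((2 + ω) / 4)
          + (1 - φ) * (1 / 2 + δ) * (((2 + ω) - 2 * α * (1 - ω)) / 4) ↔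
        α < (2 + ω) * ((1 / 2 - δ) + (1 - φ) * (1 / 2 + δ))
              / (2 * (1 - φ) * (1 / 2 + δ) * (1 - ω)))) ∧
    StrictMonoOn
      (fun φ : ℝ => (2 + ω) * ((1 / 2 - δ) + (1 - φ) * (1 / 2 + δ))
        / (2 * (1 - φ) * (1 / 2 + δ) * (1 - ω)))
      (Set.Ico (0 : ℝ) 1) := by
  obtain ⟨hω₁, hω₀⟩ := hω
  obtain ⟨hδ₀, hδ₁⟩ := hδ
  have hA : 0 < 1 / 2 + δ := by linarith
  have hm : 0 < 1 - ω := by linarith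
  refine ⟨fun φ hφ α => netEngagement_pos_iff_s14 ?_ hm, ?_⟩
  · exact mul_pos (by linarith [hφ.2]) hA
  · exact (strictMonoOn_threshold (by linarith) hA (by linarith) hm).mono
      Set.Ico_subset_Iio_self
end
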